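/- Let n ≥ 1, T > 0, and let γ be a real constant. Let f : (0,T) × ℝⁿ → ℝ be smooth and positive with ∂_τ f = Δf − γ·f·log f on (0,T) × ℝⁿ. Set u := −log f and H := |∇u|² − u/τ. Then on (0,T) × ℝⁿ: ∂_τ H = ΔH − 2·⟨∇H, ∇u⟩ − (1/τ + γ)·H − 2·‖∇²u‖² − γ·|∇u|². -/

import Mathlib

open Set
open scoped RealInnerProductSpace

noncomputable section

/-- The `i`-th standard basis vector of `ℝⁿ`. -/
def e (n : ℕ) (i : Fin n) : EuclideanSpace ℝ (Fin n) := EuclideanSpace.single i 1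

/-- Spatial gradient of a time-dependent function on `ℝⁿ`. -/
def sgrad (n : ℕ) (u : ℝ → EuclideanSpace ℝ (Fin n) → ℝ) (t : ℝ)
    (x : EuclideanSpace ℝ (Fin n)) : EuclideanSpace ℝ (Fin n) :=
  gradient (u t) x

/-- `(i,j)` entry of the spatial Hessian of a time-dependent function on `ℝⁿ`. -/
def shess (n : ℕ) (u : ℝ → EuclideanSpace ℝ (Fin n) → ℝ) (t : ℝ)
    (x : EuclideanSpace ℝ (Fin n)) (i j : Fin n) : ℝ :=
  fderiv ℝ (fun y => fderiv ℝ (u t) y (e n j)) x (e n i)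

/-- Spatial Laplacian (trace of the spatial Hessian). -/
def slap (n : ℕ) (u : ℝ → EuclideanSpace ℝ (Fin n) → ℝ) (t : ℝ)
    (x : EuclideanSpace ℝ (Fin n)) : ℝ :=
  ∑ i, shess n u t x i i

/-- Squared Frobenius norm of the spatial Hessian. -/
def hessSq (n : ℕ) (u : ℝ → EuclideanSpace ℝ (Fin n) → ℝ) (t : ℝ)
    (x : EuclideanSpace ℝ (Fin n)) : ℝ :=
  ∑ i, ∑ j, (shess n u t x i j) ^ 2

/-- Time derivative of a time-dependent function on `ℝⁿ`. -/
def tderiv (n : ℕ) (u : ℝ → EuclideanSpace ℝ (Fin n) → ℝ) (t : ℝ)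
    (x : EuclideanSpace ℝ (Fin n)) : ℝ :=
  deriv (fun s => u s x) t

namespace EvoAux

lemma le_inf1 : (1:WithTop ℕ∞) ≤ ((⊤:ℕ∞) : WithTop ℕ∞) := by
  rw [show ((1:WithTop ℕ∞)) = (((1:ℕ∞)) : WithTop ℕ∞) by norm_cast]
  exact WithTop.coe_le_coe.2 le_top

lemma le_inf2 : (2:WithTop ℕ∞) ≤ ((⊤:ℕ∞) : WithTop ℕ∞) := by
  rw [show ((2:WithTop ℕ∞)) = (((2:ℕ∞)) : WithTop ℕ∞) by norm_cast]
  exact WithTop.coe_le_coe.2 le_top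

variable {E : Type*} [NormedAddCommGroup E] [NormedSpace ℝ E]

/-- directional derivative -/
def D1 (G : E → ℝ) (v : E) (q : E) : ℝ := fderiv ℝ G q v
def D2 (G : E → ℝ) (v w : E) (q : E) : ℝ := fderiv ℝ (D1 G w) q v
def D3 (G : E → ℝ) (v w z : E) (q : E) : ℝ := fderiv ℝ (D2 G w z) q v

lemma aux_smooth_dir {S : Set E} (hS : IsOpen S) {G : E → ℝ}
    (hG : ContDiffOn ℝ (⊤ : ℕ∞) G S) (v : E) :
    ContDiffOn ℝ (⊤ : ℕ∞) (D1 G v) S := by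
  have h1 : ContDiffOn ℝ (⊤ : ℕ∞) (fun q => fderivWithin ℝ G S q) S :=
    hG.fderivWithin hS.uniqueDiffOn (by simp)
  have h2 : ContDiffOn ℝ (⊤ : ℕ∞) (fun q => fderiv ℝ G q) S := by
    apply h1.congr
    intro q hq
    rw [fderivWithin_of_isOpen hS hq]
  exact h2.clm_apply contDiffOn_const

lemma D2_smooth {S : Set E} (hS : IsOpen S) {G : E → ℝ}
    (hG : ContDiffOn ℝ (⊤ : ℕ∞) G S) (v w : E) :
    ContDiffOn ℝ (⊤ : ℕ∞) (D2 G v w) S :=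
  aux_smooth_dir hS (aux_smooth_dir hS hG w) v

lemma aux_diffAt {S : Set E} (hS : IsOpen S) {G : E → ℝ}
    (hG : ContDiffOn ℝ (⊤ : ℕ∞) G S) {p : E} (hp : p ∈ S) :
    DifferentiableAt ℝ G p :=
  ((hG p hp).contDiffAt (hS.mem_nhds hp)).differentiableAt (by simp)

lemma aux_clairaut {S : Set E} (hS : IsOpen S) {G : E → ℝ}
    (hG : ContDiffOn ℝ (⊤ : ℕ∞) G S) {p : E} (hp : p ∈ S) (v w : E) :
    fderiv ℝ (fun q => fderiv ℝ G q w) p v = fderiv ℝ (fun q => fderiv ℝ G q v) p w := by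
  have hca : ContDiffAt ℝ (⊤ : ℕ∞) G p := (hG p hp).contDiffAt (hS.mem_nhds hp)
  have hder : DifferentiableAt ℝ (fderiv ℝ G) p :=
    (hca.fderiv_right (m := 1) (by
      rw [show ((1:WithTop ℕ∞)+1) = (((2:ℕ∞)) : WithTop ℕ∞) by norm_cast]
      exact WithTop.coe_le_coe.2 le_top)).differentiableAt one_ne_zero
  have hsym := hca.isSymmSndFDerivAt (by simpa [minSmoothness_of_isRCLikeNormedField] using le_inf2)
  rw [fderiv_clm_apply hder (differentiableAt_const w),
    fderiv_clm_apply hder (differentiableAt_const v)]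
  simp [hsym.eq v w]

lemma D2_symm {S : Set E} (hS : IsOpen S) {G : E → ℝ}
    (hG : ContDiffOn ℝ (⊤ : ℕ∞) G S) {p : E} (hp : p ∈ S) (v w : E) :
    D2 G v w p = D2 G w v p :=
  aux_clairaut hS hG hp v w

lemma D3_symm12 {S : Set E} (hS : IsOpen S) {G : E → ℝ}
    (hG : ContDiffOn ℝ (⊤ : ℕ∞) G S) {p : E} (hp : p ∈ S) (v w z : E) :
    D3 G v w z p = D3 G w v z p :=
  aux_clairaut hS (aux_smooth_dir hS hG z) hp v w

lemma D3_symm23 {S : Set E} (hS : IsOpen S) {G : E → ℝ}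
    (hG : ContDiffOn ℝ (⊤ : ℕ∞) G S) {p : E} (hp : p ∈ S) (v w z : E) :
    D3 G v w z p = D3 G v z w p := by
  unfold D3
  have h : D2 G w z =ᶠ[nhds p] D2 G z w := by
    filter_upwards [hS.mem_nhds hp] with q hq
    exact D2_symm hS hG hq w z
  rw [h.fderiv_eq]

/- calculus rules for D1 -/

lemma D1_congr_nhds {G1 G2 : E → ℝ} {q : E} (h : G1 =ᶠ[nhds q] G2) (v : E) :
    D1 G1 v q = D1 G2 v q := by
  unfold D1; rw [h.fderiv_eq]

lemma D1_mul {G1 G2 : E → ℝ} {q : E} (h1 : DifferentiableAt ℝ G1 q)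
    (h2 : DifferentiableAt ℝ G2 q) (v : E) :
    D1 (fun q' => G1 q' * G2 q') v q = G1 q * D1 G2 v q + G2 q * D1 G1 v q := by
  unfold D1; rw [fderiv_fun_mul h1 h2]; simp

lemma D1_sq {G : E → ℝ} {q : E} (h : DifferentiableAt ℝ G q) (v : E) :
    D1 (fun q' => (G q') ^ 2) v q = 2 * G q * D1 G v q := by
  have : (fun q' => (G q') ^ 2) = fun q' => G q' * G q' := by
    funext q'; ring
  rw [this, D1_mul h h]; ring

lemma D1_sum {ι : Type*} [Fintype ι] {G : ι → E → ℝ} {q : E}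
    (h : ∀ i, DifferentiableAt ℝ (G i) q) (v : E) :
    D1 (fun q' => ∑ i, G i q') v q = ∑ i, D1 (G i) v q := by
  unfold D1
  rw [fderiv_fun_sum (fun i _ => h i)]
  simp

lemma D1_sub {G1 G2 : E → ℝ} {q : E} (h1 : DifferentiableAt ℝ G1 q)
    (h2 : DifferentiableAt ℝ G2 q) (v : E) :
    D1 (fun q' => G1 q' - G2 q') v q = D1 G1 v q - D1 G2 v q := by
  unfold D1; rw [fderiv_fun_sub h1 h2]; simp

lemma D1_const_mul {G : E → ℝ} {q : E} (h : DifferentiableAt ℝ G q) (c : ℝ) (v : E) :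
    D1 (fun q' => c * G q') v q = c * D1 G v q := by
  unfold D1; rw [fderiv_const_mul h]; simp

lemma D1_neg {G : E → ℝ} {q : E} (v : E) :
    D1 (fun q' => -(G q')) v q = -(D1 G v q) := by
  unfold D1; rw [fderiv_fun_neg]; simp

lemma D1_inv {G : E → ℝ} {q : E} (h : DifferentiableAt ℝ G q) (hne : G q ≠ 0) (v : E) :
    D1 (fun q' => (G q')⁻¹) v q = -((G q)^2)⁻¹ * D1 G v q := by
  unfold D1
  have hh : HasFDerivAt (fun q' => (G q')⁻¹)
      ((-((G q) ^ 2)⁻¹) • fderiv ℝ G q) q :=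
    (hasDerivAt_inv hne).comp_hasFDerivAt q h.hasFDerivAt
  rw [hh.fderiv]; simp

lemma D1_log {G : E → ℝ} {q : E} (h : DifferentiableAt ℝ G q) (hne : G q ≠ 0) (v : E) :
    D1 (fun q' => Real.log (G q')) v q = (G q)⁻¹ * D1 G v q := by
  unfold D1
  rw [(h.hasFDerivAt.log hne).fderiv]; simp

/- slice lemmas -/

variable {X : Type*} [NormedAddCommGroup X] [NormedSpace ℝ X]

lemma slice_hasFDerivAt {G : ℝ × X → ℝ} {τ : ℝ} {x : X}
    (hG : DifferentiableAt ℝ G (τ, x)) :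
    HasFDerivAt (fun y => G (τ, y))
      ((fderiv ℝ G (τ,x)).comp (ContinuousLinearMap.inr ℝ ℝ X)) x :=
  hG.hasFDerivAt.comp x (hasFDerivAt_prodMk_right τ x)

lemma slice_fderiv {G : ℝ × X → ℝ} {τ : ℝ} {x : X}
    (hG : DifferentiableAt ℝ G (τ, x)) (w : X) :
    fderiv ℝ (fun y => G (τ, y)) x w = D1 G (0, w) (τ, x) := by
  rw [(slice_hasFDerivAt hG).fderiv]; rfl

lemma slice_hasDerivAt {G : ℝ × X → ℝ} {τ : ℝ} {x : X}
    (hG : DifferentiableAt ℝ G (τ, x)) :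
    HasDerivAt (fun s => G (s, x)) (D1 G (1, 0) (τ, x)) τ :=
  hG.hasFDerivAt.comp_hasDerivAt τ ((hasDerivAt_id τ).prodMk (hasDerivAt_const τ x))

/- bridges on S = Ioo 0 T ×ˢ univ -/

lemma S_isOpen (T : ℝ) : IsOpen ((Ioo (0:ℝ) T) ×ˢ (univ : Set X)) :=
  isOpen_Ioo.prod isOpen_univ

lemma S_mem {T τ : ℝ} (hτ : τ ∈ Ioo (0:ℝ) T) (x : X) :
    (τ, x) ∈ (Ioo (0:ℝ) T) ×ˢ (univ : Set X) :=
  mk_mem_prod hτ (mem_univ x)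

lemma bridge1 {T : ℝ} {G : ℝ × X → ℝ}
    (hG : ContDiffOn ℝ (⊤:ℕ∞) G ((Ioo (0:ℝ) T) ×ˢ (univ : Set X)))
    {τ : ℝ} (hτ : τ ∈ Ioo (0:ℝ) T) (y : X) (w : X) :
    fderiv ℝ (fun y' => G (τ, y')) y w = D1 G (0, w) (τ, y) :=
  slice_fderiv (aux_diffAt (S_isOpen T) hG (S_mem hτ y)) w

lemma bridge2 {T : ℝ} {G : ℝ × X → ℝ}
    (hG : ContDiffOn ℝ (⊤:ℕ∞) G ((Ioo (0:ℝ) T) ×ˢ (univ : Set X)))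
    {τ : ℝ} (hτ : τ ∈ Ioo (0:ℝ) T) (y : X) (w1 w2 : X) :
    fderiv ℝ (fun y' => fderiv ℝ (fun y'' => G (τ, y'')) y' w2) y w1
      = D2 G (0, w1) (0, w2) (τ, y) := by
  have h : (fun y' => fderiv ℝ (fun y'' => G (τ, y'')) y' w2)
      = fun y' => D1 G (0, w2) (τ, y') := funext fun y' => bridge1 hG hτ y' w2
  rw [h, slice_fderiv (aux_diffAt (S_isOpen T) (aux_smooth_dir (S_isOpen T) hG (0, w2))
    (S_mem hτ y)) w1]
  rfl

lemma bridge3 {T : ℝ} {G : ℝ × X → ℝ}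
    (hG : ContDiffOn ℝ (⊤:ℕ∞) G ((Ioo (0:ℝ) T) ×ˢ (univ : Set X)))
    {τ : ℝ} (hτ : τ ∈ Ioo (0:ℝ) T) (x : X) :
    deriv (fun s => G (s, x)) τ = D1 G (1, 0) (τ, x) :=
  (slice_hasDerivAt (aux_diffAt (S_isOpen T) hG (S_mem hτ x))).deriv

/- coordinate lemmas -/

lemma grad_coord {n : ℕ} (g : EuclideanSpace ℝ (Fin n) → ℝ) (x : EuclideanSpace ℝ (Fin n))
    (i : Fin n) : gradient g x i = fderiv ℝ g x (e n i) := by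
  have h1 : ⟪gradient g x, e n i⟫ = fderiv ℝ g x (e n i) :=
    InnerProductSpace.toDual_symm_apply
  rw [← h1, e, EuclideanSpace.inner_single_right]
  simp

lemma norm_grad_sq {n : ℕ} (g : EuclideanSpace ℝ (Fin n) → ℝ) (x : EuclideanSpace ℝ (Fin n)) :
    ‖gradient g x‖ ^ 2 = ∑ i, (fderiv ℝ g x (e n i)) ^ 2 := by
  rw [EuclideanSpace.norm_eq, Real.sq_sqrt (by positivity)]
  exact Finset.sum_congr rfl fun i _ => by rw [Real.norm_eq_abs, sq_abs, grad_coord]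

lemma inner_grads {n : ℕ} (g h : EuclideanSpace ℝ (Fin n) → ℝ) (x : EuclideanSpace ℝ (Fin n)) :
    ⟪gradient g x, gradient h x⟫ = ∑ i, fderiv ℝ g x (e n i) * fderiv ℝ h x (e n i) := by
  rw [PiLp.inner_apply]
  exact Finset.sum_congr rfl fun i _ => by
    rw [grad_coord, grad_coord]; simp [mul_comm]



lemma algebra_key (n : ℕ) (τ γ a : ℝ) (hτ : τ ≠ 0)
    (A : Fin n → ℝ) (B : Fin n → Fin n → ℝ) (C : Fin n → Fin n → Fin n → ℝ)
    (hC : ∀ i k, C i i k = C k i i) :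
    (∑ i, 2 * A i * ((∑ j, C i j j) - 2 * (∑ j, A j * B i j) - γ * A i))
      - (a * (-(τ^2)⁻¹ * 1) + τ⁻¹ * ((∑ j, B j j) - (∑ j, (A j)^2) - γ * a))
    = (∑ i, ((∑ k, (2 * (B i k * B i k) + 2 * (A k * C i i k))) - τ⁻¹ * B i i))
      - 2 * (∑ i, ((∑ k, 2 * A k * B i k) - τ⁻¹ * A i) * A i)
      - (1/τ + γ) * ((∑ i, (A i)^2) - a/τ)
      - 2 * (∑ i, ∑ j, (B i j)^2)
      - γ * (∑ i, (A i)^2) := by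
  set P1 := ∑ i, (A i)^2 with hP1
  set P2 := ∑ i, B i i with hP2
  set P3 := ∑ i, ∑ j, (B i j)^2 with hP3
  set P4 := ∑ i, A i * (∑ j, A j * B i j) with hP4
  set P5 := ∑ i, A i * (∑ j, C i j j) with hP5
  have l1 : (∑ i, 2 * A i * ((∑ j, C i j j) - 2 * (∑ j, A j * B i j) - γ * A i))
      = 2 * P5 - 4 * P4 - 2 * γ * P1 := by
    have h : ∀ i : Fin n, 2 * A i * ((∑ j, C i j j) - 2 * (∑ j, A j * B i j) - γ * A i)
        = 2 * (A i * (∑ j, C i j j)) - 4 * (A i * (∑ j, A j * B i j)) - 2*γ*(A i)^2 :=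
      fun i => by ring
    rw [Finset.sum_congr rfl fun i _ => h i, Finset.sum_sub_distrib, Finset.sum_sub_distrib,
      ← Finset.mul_sum, ← Finset.mul_sum, ← Finset.mul_sum]
  have l2 : (∑ i, ((∑ k, (2 * (B i k * B i k) + 2 * (A k * C i i k))) - τ⁻¹ * B i i))
      = 2 * P3 + 2 * P5 - τ⁻¹ * P2 := by
    have h2a : ∀ i : Fin n, (∑ k, (2 * (B i k * B i k) + 2 * (A k * C i i k)))
        = 2 * (∑ k, (B i k)^2) + 2 * (∑ k, A k * C k i i) := by
      intro i
      rw [Finset.sum_add_distrib, ← Finset.mul_sum, ← Finset.mul_sum]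
      congr 1
      · congr 1; exact Finset.sum_congr rfl fun k _ => by ring
      · congr 1; exact Finset.sum_congr rfl fun k _ => by rw [hC i k]
    rw [Finset.sum_congr rfl fun i _ => by rw [h2a i]]
    rw [Finset.sum_sub_distrib, Finset.sum_add_distrib, ← Finset.mul_sum, ← Finset.mul_sum,
      ← Finset.mul_sum]
    congr 2
    rw [Finset.sum_comm]
    congr 1
    exact Finset.sum_congr rfl fun k _ => (Finset.mul_sum _ _ _).symm
  have l3 : (∑ i, ((∑ k, 2 * A k * B i k) - τ⁻¹ * A i) * A i) = 2 * P4 - τ⁻¹ * P1 := by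
    have h3 : ∀ i : Fin n, ((∑ k, 2 * A k * B i k) - τ⁻¹ * A i) * A i
        = 2 * (A i * (∑ k, A k * B i k)) - τ⁻¹ * (A i)^2 := by
      intro i
      have h4 : (∑ k, 2 * A k * B i k) = 2 * (∑ k, A k * B i k) := by
        rw [Finset.mul_sum]; exact Finset.sum_congr rfl fun k _ => by ring
      rw [h4]; ring
    rw [Finset.sum_congr rfl fun i _ => h3 i, Finset.sum_sub_distrib, ← Finset.mul_sum,
      ← Finset.mul_sum]
  rw [l1, l2, l3]
  field_simp
  ring

end EvoAux

open EvoAux in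
/-- Evolution identity for the Harnack quantity `H = |∇u|² − u/τ`
(proof of Theorem C), static flat case. -/
theorem evolution_harnack_quantity_theorem_C (n : ℕ) (hn : 1 ≤ n)
    (T γ : ℝ) (hT : 0 < T)
    (f : ℝ → EuclideanSpace ℝ (Fin n) → ℝ)
    (hf : ContDiffOn ℝ (⊤ : ℕ∞) (Function.uncurry f)
      (Ioo (0 : ℝ) T ×ˢ (univ : Set (EuclideanSpace ℝ (Fin n)))))
    (hpos : ∀ τ ∈ Ioo (0 : ℝ) T, ∀ x, 0 < f τ x)
    (hpde : ∀ τ ∈ Ioo (0 : ℝ) T, ∀ x,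
      tderiv n f τ x = slap n f τ x - γ * f τ x * Real.log (f τ x))
    (u : ℝ → EuclideanSpace ℝ (Fin n) → ℝ)
    (hu : u = fun τ x => -Real.log (f τ x))
    (H : ℝ → EuclideanSpace ℝ (Fin n) → ℝ)
    (hH : H = fun τ x => ‖sgrad n u τ x‖ ^ 2 - u τ x / τ) :
    ∀ τ ∈ Ioo (0 : ℝ) T, ∀ x,
      tderiv n H τ x
        = slap n H τ x - 2 * ⟪sgrad n H τ x, sgrad n u τ x⟫
          - (1 / τ + γ) * H τ x
          - 2 * hessSq n u τ x
          - γ * ‖sgrad n u τ x‖ ^ 2 := by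
  intro τ hτ x
  have hτ0 : τ ≠ 0 := ne_of_gt hτ.1
  have hSopen : IsOpen ((Ioo (0:ℝ) T) ×ˢ (univ : Set (EuclideanSpace ℝ (Fin n)))) :=
    S_isOpen T
  have hp : (τ, x) ∈ (Ioo (0:ℝ) T) ×ˢ (univ : Set (EuclideanSpace ℝ (Fin n))) := S_mem hτ x
  set F : ℝ × EuclideanSpace ℝ (Fin n) → ℝ := Function.uncurry f with hFdef
  have hF : ContDiffOn ℝ (⊤:ℕ∞) F ((Ioo (0:ℝ) T) ×ˢ (univ : Set (EuclideanSpace ℝ (Fin n)))) :=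
    hf.of_le (by simp)
  have hFpos : ∀ q ∈ (Ioo (0:ℝ) T) ×ˢ (univ : Set (EuclideanSpace ℝ (Fin n))), 0 < F q :=
    fun q hq => hpos q.1 hq.1 q.2
  set U : ℝ × EuclideanSpace ℝ (Fin n) → ℝ := fun q => -Real.log (F q) with hUdef
  have hU : ContDiffOn ℝ (⊤:ℕ∞) U ((Ioo (0:ℝ) T) ×ˢ (univ : Set (EuclideanSpace ℝ (Fin n)))) :=
    (hF.log (fun q hq => (hFpos q hq).ne')).neg
  have hueq : ∀ τ' : ℝ, u τ' = fun y => U (τ', y) := by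
    intro τ'; funext y; rw [hu]; rfl
  -- differentiability helpers
  have hdF0 : ∀ q ∈ (Ioo (0:ℝ) T) ×ˢ (univ : Set (EuclideanSpace ℝ (Fin n))),
      DifferentiableAt ℝ F q := fun q hq => aux_diffAt hSopen hF hq
  have hdF1 : ∀ (v : ℝ × EuclideanSpace ℝ (Fin n)),
      ∀ q ∈ (Ioo (0:ℝ) T) ×ˢ (univ : Set (EuclideanSpace ℝ (Fin n))),
      DifferentiableAt ℝ (D1 F v) q :=
    fun v q hq => aux_diffAt hSopen (aux_smooth_dir hSopen hF v) hq
  have hdU0 : ∀ q ∈ (Ioo (0:ℝ) T) ×ˢ (univ : Set (EuclideanSpace ℝ (Fin n))),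
      DifferentiableAt ℝ U q := fun q hq => aux_diffAt hSopen hU hq
  have hdU1 : ∀ (v : ℝ × EuclideanSpace ℝ (Fin n)),
      ∀ q ∈ (Ioo (0:ℝ) T) ×ˢ (univ : Set (EuclideanSpace ℝ (Fin n))),
      DifferentiableAt ℝ (D1 U v) q :=
    fun v q hq => aux_diffAt hSopen (aux_smooth_dir hSopen hU v) hq
  have hdU2 : ∀ (v w : ℝ × EuclideanSpace ℝ (Fin n)),
      ∀ q ∈ (Ioo (0:ℝ) T) ×ˢ (univ : Set (EuclideanSpace ℝ (Fin n))),
      DifferentiableAt ℝ (D2 U v w) q :=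
    fun v w q hq => aux_diffAt hSopen (D2_smooth hSopen hU v w) hq
  -- the PDE for F in directional-derivative language
  have hpdeF : ∀ q ∈ (Ioo (0:ℝ) T) ×ˢ (univ : Set (EuclideanSpace ℝ (Fin n))),
      D1 F ((1:ℝ), (0:EuclideanSpace ℝ (Fin n))) q
        = (∑ j, D2 F (0, e n j) (0, e n j) q) - γ * F q * Real.log (F q) := by
    rintro ⟨τ', y⟩ hq
    have h1 : tderiv n f τ' y = D1 F (1, 0) (τ', y) := bridge3 hF hq.1 y
    have h2 : slap n f τ' y = ∑ j, D2 F (0, e n j) (0, e n j) (τ', y) := by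
      unfold slap shess
      exact Finset.sum_congr rfl fun j _ => bridge2 hF hq.1 y (e n j) (e n j)
    have h3 := hpde τ' hq.1 y
    rw [h1, h2] at h3
    exact h3
  -- first derivative of U in terms of F
  have hD1U : ∀ q ∈ (Ioo (0:ℝ) T) ×ˢ (univ : Set (EuclideanSpace ℝ (Fin n))),
      ∀ v, D1 U v q = -((F q)⁻¹ * D1 F v q) := by
    intro q hq v
    have h1 : D1 U v q = -(D1 (fun q' => Real.log (F q')) v q) := D1_neg v
    rw [h1, D1_log (hdF0 q hq) (hFpos q hq).ne' v]
  -- second derivative of U in terms of F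
  have hD2U : ∀ q ∈ (Ioo (0:ℝ) T) ×ˢ (univ : Set (EuclideanSpace ℝ (Fin n))),
      ∀ v w, D2 U v w q
        = -((F q)⁻¹ * D2 F v w q + D1 F w q * (-((F q)^2)⁻¹ * D1 F v q)) := by
    intro q hq v w
    have hinv : DifferentiableAt ℝ (fun q' => (F q')⁻¹) q :=
      (hdF0 q hq).inv (hFpos q hq).ne'
    have heq : D1 U w =ᶠ[nhds q] fun q' => -((F q')⁻¹ * D1 F w q') := by
      filter_upwards [hSopen.mem_nhds hq] with r hr
      exact hD1U r hr w
    have h1 : D2 U v w q = D1 (fun q' => -((F q')⁻¹ * D1 F w q')) v q :=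
      D1_congr_nhds heq v
    have h2 : D1 (fun q' => -((F q')⁻¹ * D1 F w q')) v q
        = -(D1 (fun q' => (F q')⁻¹ * D1 F w q') v q) := D1_neg v
    have h3 : D1 (fun q' => (F q')⁻¹ * D1 F w q') v q
        = (F q)⁻¹ * D1 (D1 F w) v q + D1 F w q * D1 (fun q' => (F q')⁻¹) v q :=
      D1_mul hinv (hdF1 w q hq) v
    have h4 : D1 (fun q' => (F q')⁻¹) v q = -((F q)^2)⁻¹ * D1 F v q :=
      D1_inv (hdF0 q hq) (hFpos q hq).ne' v
    rw [h1, h2, h3, h4]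
    rfl
  -- the PDE for U
  have hpdeU : ∀ q ∈ (Ioo (0:ℝ) T) ×ˢ (univ : Set (EuclideanSpace ℝ (Fin n))),
      D1 U ((1:ℝ), (0:EuclideanSpace ℝ (Fin n))) q
        = (∑ j, D2 U (0, e n j) (0, e n j) q) - (∑ j, (D1 U (0, e n j) q)^2) - γ * U q := by
    intro q hq
    have hne := (hFpos q hq).ne'
    have h2 : ∀ j : Fin n, D2 U (0, e n j) (0, e n j) q
        = -((F q)⁻¹ * D2 F (0, e n j) (0, e n j) q
            + D1 F (0, e n j) q * (-((F q)^2)⁻¹ * D1 F (0, e n j) q)) :=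
      fun j => hD2U q hq _ _
    have h3 : ∀ j : Fin n, (D1 U (0, e n j) q)^2 = ((F q)⁻¹ * D1 F (0, e n j) q)^2 :=
      fun j => by rw [hD1U q hq]; ring
    rw [hD1U q hq, hpdeF q hq, Finset.sum_congr rfl fun j _ => h2 j,
      Finset.sum_congr rfl fun j _ => h3 j]
    have e1 : (∑ j, -((F q)⁻¹ * D2 F (0, e n j) (0, e n j) q
            + D1 F (0, e n j) q * (-((F q)^2)⁻¹ * D1 F (0, e n j) q)))
        = -((F q)⁻¹ * (∑ j, D2 F (0, e n j) (0, e n j) q))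
          + ((F q)^2)⁻¹ * (∑ j, (D1 F (0, e n j) q)^2) := by
      rw [Finset.mul_sum, Finset.mul_sum, ← Finset.sum_neg_distrib, ← Finset.sum_add_distrib]
      exact Finset.sum_congr rfl fun j _ => by ring
    have e2 : (∑ j, ((F q)⁻¹ * D1 F (0, e n j) q)^2)
        = ((F q)^2)⁻¹ * (∑ j, (D1 F (0, e n j) q)^2) := by
      rw [Finset.mul_sum]
      exact Finset.sum_congr rfl fun j _ => by rw [mul_pow, inv_pow]
    rw [e1, e2]
    have hUq : U q = -Real.log (F q) := rfl
    rw [hUq]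
    field_simp
    ring
  -- pointwise values of u
  have hux : ∀ τ' y, u τ' y = U (τ', y) := fun τ' y => by rw [hueq τ']
  -- the function Φ representing H
  set Φ : ℝ × EuclideanSpace ℝ (Fin n) → ℝ :=
    fun q => (∑ k, (D1 U (0, e n k) q)^2) - U q * (q.1)⁻¹ with hΦdef
  have hΦ : ContDiffOn ℝ (⊤:ℕ∞) Φ
      ((Ioo (0:ℝ) T) ×ˢ (univ : Set (EuclideanSpace ℝ (Fin n)))) := by
    apply ContDiffOn.sub
    · exact ContDiffOn.sum fun k _ => (aux_smooth_dir hSopen hU (0, e n k)).pow 2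
    · exact hU.mul ((contDiff_fst.contDiffOn).inv fun q hq => ne_of_gt hq.1.1)
  have hdΦ1 : ∀ (v : ℝ × EuclideanSpace ℝ (Fin n)),
      ∀ q ∈ (Ioo (0:ℝ) T) ×ˢ (univ : Set (EuclideanSpace ℝ (Fin n))),
      DifferentiableAt ℝ (D1 Φ v) q :=
    fun v q hq => aux_diffAt hSopen (aux_smooth_dir hSopen hΦ v) hq
  -- H agrees with Φ on the domain
  have hHΦ : ∀ τ' ∈ Ioo (0:ℝ) T, ∀ y, H τ' y = Φ (τ', y) := by
    intro τ' hτ' y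
    rw [hH]
    show ‖sgrad n u τ' y‖ ^ 2 - u τ' y / τ' = _
    unfold sgrad
    rw [norm_grad_sq, hueq τ']
    have hco : ∀ i : Fin n, fderiv ℝ (fun y' => U (τ', y')) y (e n i)
        = D1 U (0, e n i) (τ', y) := fun i => bridge1 hU hτ' y (e n i)
    rw [Finset.sum_congr rfl fun i _ => by rw [hco i], div_eq_mul_inv]
  have hHt : H τ = fun y => Φ (τ, y) := funext fun y => hHΦ τ hτ y
  -- quantity 1 : time derivative of H
  have hQ1 : tderiv n H τ x = D1 Φ ((1:ℝ), (0:EuclideanSpace ℝ (Fin n))) (τ, x) := by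
    unfold tderiv
    have hev : (fun s => H s x) =ᶠ[nhds τ] fun s => Φ (s, x) := by
      filter_upwards [isOpen_Ioo.mem_nhds hτ] with s hs
      exact hHΦ s hs x
    rw [hev.deriv_eq]
    exact bridge3 hΦ hτ x
  -- quantity 2 : spatial Laplacian of H
  have hQ2 : slap n H τ x = ∑ i, D2 Φ (0, e n i) (0, e n i) (τ, x) := by
    unfold slap shess
    rw [hHt]
    exact Finset.sum_congr rfl fun i _ => bridge2 hΦ hτ x (e n i) (e n i)
  -- quantity 3 : inner product of gradients
  have hQ3 : ⟪sgrad n H τ x, sgrad n u τ x⟫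
      = ∑ i, (D1 Φ (0, e n i) (τ, x)) * (D1 U (0, e n i) (τ, x)) := by
    unfold sgrad
    rw [inner_grads, hHt, hueq τ]
    exact Finset.sum_congr rfl fun i _ => by
      rw [bridge1 hΦ hτ x (e n i), bridge1 hU hτ x (e n i)]
  -- quantity 4 : H itself
  have hQ4 : H τ x = (∑ i, (D1 U (0, e n i) (τ, x))^2) - U (τ, x) / τ := by
    rw [hHΦ τ hτ x, div_eq_mul_inv]
  -- quantity 5 : Hessian squared of u
  have hQ5 : hessSq n u τ x = ∑ i, ∑ j, (D2 U (0, e n i) (0, e n j) (τ, x))^2 := by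
    unfold hessSq shess
    rw [hueq τ]
    exact Finset.sum_congr rfl fun i _ => Finset.sum_congr rfl fun j _ => by
      rw [bridge2 hU hτ x (e n i) (e n j)]
  -- quantity 6 : gradient norm squared of u
  have hQ6 : ‖sgrad n u τ x‖ ^ 2 = ∑ i, (D1 U (0, e n i) (τ, x))^2 := by
    unfold sgrad
    rw [norm_grad_sq, hueq τ]
    exact Finset.sum_congr rfl fun i _ => by rw [bridge1 hU hτ x (e n i)]
  -- general first derivative of Φ
  have hD1Φ : ∀ q ∈ (Ioo (0:ℝ) T) ×ˢ (univ : Set (EuclideanSpace ℝ (Fin n))),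
      ∀ v : ℝ × EuclideanSpace ℝ (Fin n),
      D1 Φ v q = (∑ k, 2 * (D1 U (0, e n k) q * D2 U v (0, e n k) q))
        - (U q * (-((q.1)^2)⁻¹ * v.1) + (q.1)⁻¹ * D1 U v q) := by
    intro q hq v
    have hd1 : DifferentiableAt ℝ (fun q' => ∑ k, (D1 U (0, e n k) q')^2) q :=
      DifferentiableAt.fun_sum fun k _ => (hdU1 (0, e n k) q hq).pow 2
    have hd2 : DifferentiableAt ℝ (fun q' : ℝ × EuclideanSpace ℝ (Fin n) => (q'.1)⁻¹) q :=
      differentiableAt_fst.inv (ne_of_gt hq.1.1)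
    have hd3 : DifferentiableAt ℝ U q := hdU0 q hq
    have h0 : D1 Φ v q = D1 (fun q' => ∑ k, (D1 U (0, e n k) q')^2) v q
        - D1 (fun q' => U q' * (q'.1)⁻¹) v q := D1_sub hd1 (hd3.mul hd2) v
    have h1 : D1 (fun q' => ∑ k, (D1 U (0, e n k) q')^2) v q
        = ∑ k, D1 (fun q' => (D1 U (0, e n k) q')^2) v q :=
      D1_sum (fun k => (hdU1 (0, e n k) q hq).pow 2) v
    have h2 : ∀ k : Fin n, D1 (fun q' => (D1 U (0, e n k) q')^2) v q
        = 2 * (D1 U (0, e n k) q * D2 U v (0, e n k) q) := by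
      intro k
      rw [D1_sq (hdU1 (0, e n k) q hq) v]
      exact mul_assoc 2 _ _
    have h3 : D1 (fun q' => U q' * (q'.1)⁻¹) v q
        = U q * D1 (fun q' : ℝ × EuclideanSpace ℝ (Fin n) => (q'.1)⁻¹) v q
          + (q.1)⁻¹ * D1 U v q := D1_mul hd3 hd2 v
    have h5 : D1 (fun q' : ℝ × EuclideanSpace ℝ (Fin n) => q'.1) v q = v.1 := by
      show fderiv ℝ (fun q' : ℝ × EuclideanSpace ℝ (Fin n) => q'.1) q v = v.1
      rw [hasFDerivAt_fst.fderiv]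
      rfl
    have h4 : D1 (fun q' : ℝ × EuclideanSpace ℝ (Fin n) => (q'.1)⁻¹) v q
        = -((q.1)^2)⁻¹ * v.1 := by
      rw [D1_inv differentiableAt_fst (ne_of_gt hq.1.1) v, h5]
    rw [h0, h1, Finset.sum_congr rfl fun k _ => h2 k, h3, h4]
  -- spatial first derivative of Φ, valid on all of the domain
  have hD1Φsgen : ∀ q ∈ (Ioo (0:ℝ) T) ×ˢ (univ : Set (EuclideanSpace ℝ (Fin n))),
      ∀ i : Fin n,
      D1 Φ (0, e n i) q = (∑ k, 2 * (D1 U (0, e n k) q * D2 U (0, e n i) (0, e n k) q))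
        - (q.1)⁻¹ * D1 U (0, e n i) q := by
    intro q hq i
    rw [hD1Φ q hq (0, e n i)]
    have h0 : (((0:ℝ), e n i) : ℝ × EuclideanSpace ℝ (Fin n)).1 = (0:ℝ) := rfl
    rw [h0]
    ring
  -- spatial first derivative of Φ at the point, in final shape
  have hD1Φs : ∀ i : Fin n,
      D1 Φ (0, e n i) (τ, x)
        = (∑ k, 2 * D1 U (0, e n k) (τ, x) * D2 U (0, e n i) (0, e n k) (τ, x))
          - τ⁻¹ * D1 U (0, e n i) (τ, x) := by
    intro i
    rw [hD1Φsgen (τ, x) hp i]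
    have h2 : (((τ, x)) : ℝ × EuclideanSpace ℝ (Fin n)).1 = τ := rfl
    rw [h2, Finset.sum_congr rfl fun k _ => (mul_assoc 2
      (D1 U (0, e n k) (τ, x)) (D2 U (0, e n i) (0, e n k) (τ, x))).symm]
  -- second spatial derivative of Φ at the point
  have hD2Φ : ∀ i : Fin n,
      D2 Φ (0, e n i) (0, e n i) (τ, x)
        = (∑ k, (2 * (D2 U (0, e n i) (0, e n k) (τ, x) * D2 U (0, e n i) (0, e n k) (τ, x))
            + 2 * (D1 U (0, e n k) (τ, x)
                * D3 U (0, e n i) (0, e n i) (0, e n k) (τ, x))))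
          - τ⁻¹ * D2 U (0, e n i) (0, e n i) (τ, x) := by
    intro i
    have heq : D1 Φ (0, e n i) =ᶠ[nhds (τ, x)]
        fun q => (∑ k, 2 * (D1 U (0, e n k) q * D2 U (0, e n i) (0, e n k) q))
          - (q.1)⁻¹ * D1 U (0, e n i) q := by
      filter_upwards [hSopen.mem_nhds hp] with r hr
      exact hD1Φsgen r hr i
    have h1 : D2 Φ (0, e n i) (0, e n i) (τ, x)
        = D1 (fun q => (∑ k, 2 * (D1 U (0, e n k) q * D2 U (0, e n i) (0, e n k) q))
            - (q.1)⁻¹ * D1 U (0, e n i) q) (0, e n i) (τ, x) :=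
      D1_congr_nhds heq _
    have hdsum : DifferentiableAt ℝ
        (fun q => ∑ k, 2 * (D1 U (0, e n k) q * D2 U (0, e n i) (0, e n k) q)) (τ, x) :=
      DifferentiableAt.fun_sum fun k _ =>
        ((hdU1 (0, e n k) (τ, x) hp).mul (hdU2 (0, e n i) (0, e n k) (τ, x) hp)).const_mul 2
    have hdinv : DifferentiableAt ℝ
        (fun q : ℝ × EuclideanSpace ℝ (Fin n) => (q.1)⁻¹) (τ, x) :=
      differentiableAt_fst.inv (ne_of_gt hp.1.1)
    have hdlast : DifferentiableAt ℝ
        (fun q : ℝ × EuclideanSpace ℝ (Fin n) => (q.1)⁻¹ * D1 U (0, e n i) q) (τ, x) :=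
      hdinv.mul (hdU1 (0, e n i) (τ, x) hp)
    have h2 : D1 (fun q => (∑ k, 2 * (D1 U (0, e n k) q * D2 U (0, e n i) (0, e n k) q))
            - (q.1)⁻¹ * D1 U (0, e n i) q) (0, e n i) (τ, x)
        = D1 (fun q => ∑ k, 2 * (D1 U (0, e n k) q * D2 U (0, e n i) (0, e n k) q))
            (0, e n i) (τ, x)
          - D1 (fun q : ℝ × EuclideanSpace ℝ (Fin n) =>
              (q.1)⁻¹ * D1 U (0, e n i) q) (0, e n i) (τ, x) :=
      D1_sub hdsum hdlast _
    have h3 : D1 (fun q => ∑ k, 2 * (D1 U (0, e n k) q * D2 U (0, e n i) (0, e n k) q))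
            (0, e n i) (τ, x)
        = ∑ k, D1 (fun q => 2 * (D1 U (0, e n k) q * D2 U (0, e n i) (0, e n k) q))
            (0, e n i) (τ, x) :=
      D1_sum (fun k => ((hdU1 (0, e n k) (τ, x) hp).mul
        (hdU2 (0, e n i) (0, e n k) (τ, x) hp)).const_mul 2) _
    have h4 : ∀ k : Fin n,
        D1 (fun q => 2 * (D1 U (0, e n k) q * D2 U (0, e n i) (0, e n k) q))
            (0, e n i) (τ, x)
          = 2 * (D2 U (0, e n i) (0, e n k) (τ, x) * D2 U (0, e n i) (0, e n k) (τ, x))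
            + 2 * (D1 U (0, e n k) (τ, x)
                * D3 U (0, e n i) (0, e n i) (0, e n k) (τ, x)) := by
      intro k
      rw [D1_const_mul ((hdU1 (0, e n k) (τ, x) hp).fun_mul
          (hdU2 (0, e n i) (0, e n k) (τ, x) hp)) 2,
        D1_mul (hdU1 (0, e n k) (τ, x) hp) (hdU2 (0, e n i) (0, e n k) (τ, x) hp)]
      show 2 * (D1 U (0, e n k) (τ, x) * D3 U (0, e n i) (0, e n i) (0, e n k) (τ, x)
          + D2 U (0, e n i) (0, e n k) (τ, x) * D2 U (0, e n i) (0, e n k) (τ, x)) = _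
      ring
    have h6 : D1 (fun q' : ℝ × EuclideanSpace ℝ (Fin n) => q'.1) (0, e n i) (τ, x)
        = (0:ℝ) := by
      show fderiv ℝ (fun q' : ℝ × EuclideanSpace ℝ (Fin n) => q'.1) (τ, x)
        ((0:ℝ), e n i) = (0:ℝ)
      rw [hasFDerivAt_fst.fderiv]
      rfl
    have h5 : D1 (fun q : ℝ × EuclideanSpace ℝ (Fin n) =>
          (q.1)⁻¹ * D1 U (0, e n i) q) (0, e n i) (τ, x)
        = τ⁻¹ * D2 U (0, e n i) (0, e n i) (τ, x) := by
      rw [D1_mul hdinv (hdU1 (0, e n i) (τ, x) hp),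
        D1_inv differentiableAt_fst (ne_of_gt hp.1.1), h6]
      show (τ, x).1⁻¹ * D2 U (0, e n i) (0, e n i) (τ, x)
          + D1 U (0, e n i) (τ, x) * (-(((τ, x).1)^2)⁻¹ * 0) = _
      have h2' : (((τ, x)) : ℝ × EuclideanSpace ℝ (Fin n)).1 = τ := rfl
      rw [h2']
      ring
    rw [h1, h2, h3, Finset.sum_congr rfl fun k _ => h4 k, h5]
  -- mixed time-space second derivative via the differentiated PDE
  have hmt : ∀ i : Fin n,
      D2 U ((1:ℝ), (0:EuclideanSpace ℝ (Fin n))) (0, e n i) (τ, x)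
        = (∑ j, D3 U (0, e n i) (0, e n j) (0, e n j) (τ, x))
          - 2 * (∑ j, D1 U (0, e n j) (τ, x) * D2 U (0, e n i) (0, e n j) (τ, x))
          - γ * D1 U (0, e n i) (τ, x) := by
    intro i
    rw [D2_symm hSopen hU hp ((1:ℝ), (0:EuclideanSpace ℝ (Fin n))) (0, e n i)]
    have heq : D1 U ((1:ℝ), (0:EuclideanSpace ℝ (Fin n))) =ᶠ[nhds (τ, x)]
        fun q => (∑ j, D2 U (0, e n j) (0, e n j) q)
          - (∑ j, (D1 U (0, e n j) q)^2) - γ * U q := by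
      filter_upwards [hSopen.mem_nhds hp] with r hr
      exact hpdeU r hr
    have h1 : D2 U (0, e n i) ((1:ℝ), (0:EuclideanSpace ℝ (Fin n))) (τ, x)
        = D1 (fun q => (∑ j, D2 U (0, e n j) (0, e n j) q)
            - (∑ j, (D1 U (0, e n j) q)^2) - γ * U q) (0, e n i) (τ, x) :=
      D1_congr_nhds heq _
    have hdA : DifferentiableAt ℝ (fun q => ∑ j, D2 U (0, e n j) (0, e n j) q) (τ, x) :=
      DifferentiableAt.fun_sum fun j _ => hdU2 (0, e n j) (0, e n j) (τ, x) hp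
    have hdB : DifferentiableAt ℝ (fun q => ∑ j, (D1 U (0, e n j) q)^2) (τ, x) :=
      DifferentiableAt.fun_sum fun j _ => (hdU1 (0, e n j) (τ, x) hp).pow 2
    have hdC : DifferentiableAt ℝ (fun q => γ * U q) (τ, x) := (hdU0 (τ, x) hp).const_mul γ
    have h2 : D1 (fun q => ((∑ j, D2 U (0, e n j) (0, e n j) q)
            - (∑ j, (D1 U (0, e n j) q)^2)) - γ * U q) (0, e n i) (τ, x)
        = D1 (fun q => (∑ j, D2 U (0, e n j) (0, e n j) q)
            - (∑ j, (D1 U (0, e n j) q)^2)) (0, e n i) (τ, x)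
          - D1 (fun q => γ * U q) (0, e n i) (τ, x) :=
      D1_sub (hdA.sub hdB) hdC _
    have h3 : D1 (fun q => (∑ j, D2 U (0, e n j) (0, e n j) q)
            - (∑ j, (D1 U (0, e n j) q)^2)) (0, e n i) (τ, x)
        = D1 (fun q => ∑ j, D2 U (0, e n j) (0, e n j) q) (0, e n i) (τ, x)
          - D1 (fun q => ∑ j, (D1 U (0, e n j) q)^2) (0, e n i) (τ, x) :=
      D1_sub hdA hdB _
    have h4 : D1 (fun q => ∑ j, D2 U (0, e n j) (0, e n j) q) (0, e n i) (τ, x)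
        = ∑ j, D3 U (0, e n i) (0, e n j) (0, e n j) (τ, x) := by
      rw [D1_sum (fun j => hdU2 (0, e n j) (0, e n j) (τ, x) hp) (0, e n i)]
      rfl
    have h5 : D1 (fun q => ∑ j, (D1 U (0, e n j) q)^2) (0, e n i) (τ, x)
        = 2 * (∑ j, D1 U (0, e n j) (τ, x) * D2 U (0, e n i) (0, e n j) (τ, x)) := by
      rw [D1_sum (fun j => (hdU1 (0, e n j) (τ, x) hp).fun_pow 2) (0, e n i),
        Finset.mul_sum]
      refine Finset.sum_congr rfl fun j _ => ?_
      rw [D1_sq (hdU1 (0, e n j) (τ, x) hp) (0, e n i)]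
      show 2 * D1 U (0, e n j) (τ, x) * D2 U (0, e n i) (0, e n j) (τ, x) = _
      ring
    have h6 : D1 (fun q => γ * U q) (0, e n i) (τ, x) = γ * D1 U (0, e n i) (τ, x) :=
      D1_const_mul (hdU0 (τ, x) hp) γ _
    rw [h1, h2, h3, h4, h5, h6]
  -- symmetry of the third derivatives
  have hC : ∀ i k : Fin n,
      D3 U (0, e n i) (0, e n i) (0, e n k) (τ, x)
        = D3 U (0, e n k) (0, e n i) (0, e n i) (τ, x) := by
    intro i k
    rw [D3_symm23 hSopen hU hp (0, e n i) (0, e n i) (0, e n k),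
      D3_symm12 hSopen hU hp (0, e n i) (0, e n k) (0, e n i)]
  have hut := hpdeU (τ, x) hp
  -- final form of the left-hand side
  have hLHS : tderiv n H τ x
      = (∑ i, 2 * D1 U (0, e n i) (τ, x)
          * ((∑ j, D3 U (0, e n i) (0, e n j) (0, e n j) (τ, x))
            - 2 * (∑ j, D1 U (0, e n j) (τ, x) * D2 U (0, e n i) (0, e n j) (τ, x))
            - γ * D1 U (0, e n i) (τ, x)))
        - (U (τ, x) * (-(τ^2)⁻¹ * 1)
          + τ⁻¹ * ((∑ j, D2 U (0, e n j) (0, e n j) (τ, x))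
            - (∑ j, (D1 U (0, e n j) (τ, x))^2) - γ * U (τ, x))) := by
    rw [hQ1, hD1Φ (τ, x) hp ((1:ℝ), (0:EuclideanSpace ℝ (Fin n)))]
    have h1 : (((1:ℝ), (0:EuclideanSpace ℝ (Fin n))) : ℝ × EuclideanSpace ℝ (Fin n)).1
        = (1:ℝ) := rfl
    have h2 : (((τ, x)) : ℝ × EuclideanSpace ℝ (Fin n)).1 = τ := rfl
    rw [h1, h2, hut]
    congr 1
    refine Finset.sum_congr rfl fun k _ => ?_
    rw [hmt k]
    ring
  have hQ2' : slap n H τ x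
      = ∑ i, ((∑ k, (2 * (D2 U (0, e n i) (0, e n k) (τ, x)
              * D2 U (0, e n i) (0, e n k) (τ, x))
            + 2 * (D1 U (0, e n k) (τ, x)
              * D3 U (0, e n i) (0, e n i) (0, e n k) (τ, x))))
          - τ⁻¹ * D2 U (0, e n i) (0, e n i) (τ, x)) := by
    rw [hQ2]
    exact Finset.sum_congr rfl fun i _ => hD2Φ i
  have hQ3' : ⟪sgrad n H τ x, sgrad n u τ x⟫
      = ∑ i, ((∑ k, 2 * D1 U (0, e n k) (τ, x) * D2 U (0, e n i) (0, e n k) (τ, x))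
          - τ⁻¹ * D1 U (0, e n i) (τ, x)) * D1 U (0, e n i) (τ, x) := by
    rw [hQ3]
    exact Finset.sum_congr rfl fun i _ => by rw [hD1Φs i]
  rw [hLHS, hQ2', hQ3', hQ4, hQ5, hQ6]
  exact algebra_key n τ γ (U (τ, x)) hτ0
    (fun i => D1 U (0, e n i) (τ, x))
    (fun i j => D2 U (0, e n i) (0, e n j) (τ, x))
    (fun i j k => D3 U (0, e n i) (0, e n j) (0, e n k) (τ, x)) hC
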